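/- arXiv:2302.03835 — 3 statements merged into one kernel-verified Lean document; each statement's English description precedes it below -/
import Mathlib

section
/- Let R_1(n) = (1/(π√2)) · g_1'(n), the derivative with respect to the real variable x of g_1(x) = sinh(π·√((2/3)(x − 1/24)))/√(x − 1/24) evaluated at x = n. Then lim_{n→∞} R_1(n)/L(n) = 1. -/
open scoped Real

noncomputable section

/-- `g_1(x) = sinh(π√((2/3)(x - 1/24)))/√(x - 1/24)`. -/
def radg1 (x : ℝ) : ℝ :=
  Real.sinh (Real.pi * Real.sqrt (2 / 3 * (x - 1 / 24))) / Real.sqrt (x - 1 / 24)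

/-- `R_1(n) = (1/(π√2)) g_1'(n)`. -/
def radR1 (n : ℕ) : ℝ := 1 / (Real.pi * Real.sqrt 2) * deriv radg1 n

/-- `L(n) = (1/(4n√3)) exp(π√(2n/3))`. -/
def hardyRamanujanL (n : ℕ) : ℝ :=
  1 / (4 * n * Real.sqrt 3) * Real.exp (Real.pi * Real.sqrt (2 * n / 3))

namespace FirstTermAux

open Filter

/-- The constant `c = π √(2/3)`. -/
def cc : ℝ := Real.pi * Real.sqrt (2/3)

lemma cc_pos : 0 < cc :=
  mul_pos Real.pi_pos (Real.sqrt_pos.mpr (by norm_num))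

/-- The constant `k = √3/(π√2)`. -/
def kk : ℝ := Real.sqrt 3 / (Real.pi * Real.sqrt 2)

lemma kk_mul_cc : kk * cc = 1 := by
  unfold kk cc
  have h1 : Real.sqrt 3 * Real.sqrt (2/3) = Real.sqrt 2 := by
    rw [← Real.sqrt_mul (by norm_num : (0:ℝ) ≤ 3)]
    norm_num
  have h2 : Real.sqrt 2 ≠ 0 := by positivity
  field_simp
  exact h1

lemma radg1_eq :
    radg1 = fun x => Real.sinh (cc * Real.sqrt (x - 1/24)) / Real.sqrt (x - 1/24) := by
  funext x
  unfold radg1 cc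
  rw [Real.sqrt_mul (by norm_num : (0:ℝ) ≤ 2/3), mul_assoc]

lemma radg1_hasDerivAt {x : ℝ} (hx : 1/24 < x) :
    HasDerivAt radg1
      ((cc * Real.sqrt (x - 1/24) * Real.cosh (cc * Real.sqrt (x - 1/24))
        - Real.sinh (cc * Real.sqrt (x - 1/24))) / (2 * Real.sqrt (x - 1/24)^3)) x := by
  have hu : (0:ℝ) < x - 1/24 := by linarith
  have hs : 0 < Real.sqrt (x - 1/24) := Real.sqrt_pos.mpr hu
  have h0 : HasDerivAt (fun y : ℝ => y - 1/24) 1 x := (hasDerivAt_id x).sub_const _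
  have hsqrt : HasDerivAt (fun y : ℝ => Real.sqrt (y - 1/24))
      (1 / (2 * Real.sqrt (x - 1/24))) x := by
    have h := (Real.hasDerivAt_sqrt hu.ne').comp x h0
    simpa only [Function.comp_def, mul_one] using h
  have hc : HasDerivAt (fun y : ℝ => cc * Real.sqrt (y - 1/24))
      (cc * (1 / (2 * Real.sqrt (x - 1/24)))) x := hsqrt.const_mul cc
  have hsinh : HasDerivAt (fun y : ℝ => Real.sinh (cc * Real.sqrt (y - 1/24)))
      (Real.cosh (cc * Real.sqrt (x - 1/24)) * (cc * (1 / (2 * Real.sqrt (x - 1/24))))) x := by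
    have h := (Real.hasDerivAt_sinh (cc * Real.sqrt (x - 1/24))).comp x hc
    simpa only [Function.comp_def] using h
  have hdiv := hsinh.div hsqrt hs.ne'
  rw [radg1_eq]
  refine hdiv.congr_deriv ?_
  generalize Real.sqrt (x - 1/24) = s at hs ⊢
  generalize Real.cosh (cc * s) = C
  generalize Real.sinh (cc * s) = S
  field_simp

lemma deriv_radg1 {x : ℝ} (hx : 1/24 < x) :
    deriv radg1 x = (cc * Real.sqrt (x - 1/24) * Real.cosh (cc * Real.sqrt (x - 1/24))
        - Real.sinh (cc * Real.sqrt (x - 1/24))) / (2 * Real.sqrt (x - 1/24)^3) :=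
  (radg1_hasDerivAt hx).deriv

lemma tendsto_u : Tendsto (fun n : ℕ => (n:ℝ) - 1/24) atTop atTop :=
  tendsto_atTop_add_const_right _ _ tendsto_natCast_atTop_atTop

lemma sqrt_tendsto : Tendsto Real.sqrt atTop atTop := by
  refine tendsto_atTop_atTop.mpr fun b => ⟨(max 0 b)^2, fun x hx => ?_⟩
  calc b ≤ max 0 b := le_max_right _ _
  _ = Real.sqrt ((max 0 b)^2) := (Real.sqrt_sq (le_max_left _ _)).symm
  _ ≤ Real.sqrt x := Real.sqrt_le_sqrt hx

lemma tendsto_s : Tendsto (fun n : ℕ => Real.sqrt ((n:ℝ) - 1/24)) atTop atTop :=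
  sqrt_tendsto.comp tendsto_u

lemma tendsto_nu : Tendsto (fun n : ℕ => (n:ℝ) / ((n:ℝ) - 1/24)) atTop (nhds 1) := by
  have h : Tendsto (fun n : ℕ => 1 + (1/24) * ((n:ℝ) - 1/24)⁻¹) atTop
      (nhds (1 + (1/24) * 0)) :=
    tendsto_const_nhds.add (tendsto_u.inv_tendsto_atTop.const_mul (1/24))
  rw [mul_zero, add_zero] at h
  refine h.congr' ?_
  filter_upwards [eventually_ge_atTop 1] with n hn
  have hn1 : (1:ℝ) ≤ (n:ℝ) := by exact_mod_cast hn
  have hu : ((n:ℝ) - 1/24) ≠ 0 := ne_of_gt (by linarith)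
  have h1 : (1:ℝ) + 1/24 * ((n:ℝ) - 1/24)⁻¹ = ((n:ℝ) - 1/24 + 1/24) * ((n:ℝ) - 1/24)⁻¹ := by
    rw [add_mul, mul_inv_cancel₀ hu]
  rw [h1, show ((n:ℝ) - 1/24 + 1/24) = (n:ℝ) by ring, div_eq_mul_inv]
  ring

lemma tendsto_ns3 :
    Tendsto (fun n : ℕ => (n:ℝ) / (Real.sqrt ((n:ℝ) - 1/24))^3) atTop (nhds 0) := by
  have h : Tendsto (fun n : ℕ => ((n:ℝ) / ((n:ℝ) - 1/24)) * (Real.sqrt ((n:ℝ) - 1/24))⁻¹)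
      atTop (nhds (1 * 0)) := tendsto_nu.mul tendsto_s.inv_tendsto_atTop
  rw [one_mul] at h
  refine h.congr' ?_
  filter_upwards [eventually_ge_atTop 1] with n hn
  have hn1 : (1:ℝ) ≤ (n:ℝ) := by exact_mod_cast hn
  have hu : (0:ℝ) < (n:ℝ) - 1/24 := by linarith
  have hs : 0 < Real.sqrt ((n:ℝ) - 1/24) := Real.sqrt_pos.mpr hu
  set s := Real.sqrt ((n:ℝ) - 1/24) with hsdef
  have hsq : s^2 = (n:ℝ) - 1/24 := Real.sq_sqrt hu.le
  rw [← hsq]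
  field_simp

lemma tendsto_diff :
    Tendsto (fun n : ℕ => cc * Real.sqrt ((n:ℝ) - 1/24) - cc * Real.sqrt (n:ℝ))
      atTop (nhds 0) := by
  have hden : Tendsto (fun n : ℕ => Real.sqrt (n:ℝ) + Real.sqrt ((n:ℝ) - 1/24))
      atTop atTop :=
    tendsto_atTop_mono (fun n => le_add_of_nonneg_right (Real.sqrt_nonneg _))
      (sqrt_tendsto.comp tendsto_natCast_atTop_atTop)
  have h : Tendsto (fun n : ℕ =>
      (-(cc/24)) * (Real.sqrt (n:ℝ) + Real.sqrt ((n:ℝ) - 1/24))⁻¹) atTop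
      (nhds ((-(cc/24)) * 0)) := hden.inv_tendsto_atTop.const_mul _
  rw [mul_zero] at h
  refine h.congr' ?_
  filter_upwards [eventually_ge_atTop 1] with n hn
  have hn1 : (1:ℝ) ≤ (n:ℝ) := by exact_mod_cast hn
  have hu : (0:ℝ) < (n:ℝ) - 1/24 := by linarith
  have hn0 : (0:ℝ) ≤ (n:ℝ) := by linarith
  have hsqn : (Real.sqrt (n:ℝ))^2 = (n:ℝ) := Real.sq_sqrt hn0
  have hsqu : (Real.sqrt ((n:ℝ) - 1/24))^2 = (n:ℝ) - 1/24 := Real.sq_sqrt hu.le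
  have hpos : 0 < Real.sqrt (n:ℝ) + Real.sqrt ((n:ℝ) - 1/24) := by
    have h1 := Real.sqrt_pos.mpr hu
    have h2 := Real.sqrt_nonneg (n:ℝ)
    linarith
  rw [← div_eq_mul_inv, div_eq_iff hpos.ne']
  linear_combination cc * hsqn - cc * hsqu

lemma tendsto_exp_diff :
    Tendsto (fun n : ℕ =>
      Real.exp (cc * Real.sqrt ((n:ℝ) - 1/24) - cc * Real.sqrt (n:ℝ))) atTop (nhds 1) := by
  have := (Real.continuous_exp.tendsto 0).comp tendsto_diff
  simpa [Function.comp_def] using this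

lemma tendsto_exp_sum :
    Tendsto (fun n : ℕ =>
      Real.exp (-(cc * Real.sqrt ((n:ℝ) - 1/24) + cc * Real.sqrt (n:ℝ)))) atTop (nhds 0) := by
  have hb : Tendsto (fun n : ℕ => cc * Real.sqrt (n:ℝ)) atTop atTop :=
    (sqrt_tendsto.comp tendsto_natCast_atTop_atTop).const_mul_atTop cc_pos
  have hab : Tendsto (fun n : ℕ =>
      cc * Real.sqrt ((n:ℝ) - 1/24) + cc * Real.sqrt (n:ℝ)) atTop atTop := by
    refine tendsto_atTop_mono (fun n => ?_) hb
    have : 0 ≤ cc * Real.sqrt ((n:ℝ) - 1/24) :=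
      mul_nonneg cc_pos.le (Real.sqrt_nonneg _)
    linarith
  exact Real.tendsto_exp_atBot.comp (tendsto_neg_atTop_atBot.comp hab)

/-- The key identity for `n ≥ 1`. -/
lemma ratio_eq {n : ℕ} (hn : 1 ≤ n) :
    radR1 n / hardyRamanujanL n =
      (kk * cc * ((n:ℝ) / ((n:ℝ) - 1/24)) - kk * ((n:ℝ) / (Real.sqrt ((n:ℝ) - 1/24))^3))
        * Real.exp (cc * Real.sqrt ((n:ℝ) - 1/24) - cc * Real.sqrt (n:ℝ))
      + (kk * cc * ((n:ℝ) / ((n:ℝ) - 1/24)) + kk * ((n:ℝ) / (Real.sqrt ((n:ℝ) - 1/24))^3))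
        * Real.exp (-(cc * Real.sqrt ((n:ℝ) - 1/24) + cc * Real.sqrt (n:ℝ))) := by
  have hn1 : (1:ℝ) ≤ (n:ℝ) := by exact_mod_cast hn
  have hx : (1:ℝ)/24 < (n:ℝ) := by linarith
  have hu : (0:ℝ) < (n:ℝ) - 1/24 := by linarith
  have hs : 0 < Real.sqrt ((n:ℝ) - 1/24) := Real.sqrt_pos.mpr hu
  have hsq : (Real.sqrt ((n:ℝ) - 1/24))^2 = (n:ℝ) - 1/24 := Real.sq_sqrt hu.le
  have hb : Real.pi * Real.sqrt (2 * (n:ℝ) / 3) = cc * Real.sqrt (n:ℝ) := by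
    rw [show (2 * (n:ℝ) / 3) = 2/3 * (n:ℝ) by ring,
      Real.sqrt_mul (by norm_num : (0:ℝ) ≤ 2/3)]
    unfold cc; ring
  have hkk : kk = Real.sqrt 3 / (Real.pi * Real.sqrt 2) := rfl
  unfold radR1 hardyRamanujanL
  rw [deriv_radg1 hx, hb, Real.cosh_eq, Real.sinh_eq, hkk]
  rw [Real.exp_sub, Real.exp_neg, Real.exp_neg, Real.exp_add]
  set s := Real.sqrt ((n:ℝ) - 1/24) with hsdef
  rw [← hsq]
  set ea := Real.exp (cc * s) with headef
  set eb := Real.exp (cc * Real.sqrt (n:ℝ)) with hebdef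
  have hea : ea ≠ 0 := Real.exp_ne_zero _
  have heb : eb ≠ 0 := Real.exp_ne_zero _
  have hpi : Real.pi ≠ 0 := Real.pi_ne_zero
  have h2 : Real.sqrt 2 ≠ 0 := by positivity
  have h3 : Real.sqrt 3 ≠ 0 := by positivity
  have hn0 : (n:ℝ) ≠ 0 := by linarith
  field_simp
  ring

end FirstTermAux

open FirstTermAux Filter in
/-- The first Rademacher term is asymptotic to `L(n)`: `R_1(n)/L(n) → 1`. -/
theorem first_term_asymptotic :
    Filter.Tendsto (fun n : ℕ => radR1 n / hardyRamanujanL n) Filter.atTop (nhds 1) := by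
  have hA : Tendsto (fun n : ℕ =>
      kk * cc * ((n:ℝ) / ((n:ℝ) - 1/24)) - kk * ((n:ℝ) / (Real.sqrt ((n:ℝ) - 1/24))^3))
      atTop (nhds 1) := by
    have h := (tendsto_nu.const_mul (kk * cc)).sub (tendsto_ns3.const_mul kk)
    rw [show kk * cc * 1 - kk * 0 = 1 by rw [mul_one, mul_zero, sub_zero, kk_mul_cc]] at h
    exact h
  have hB : Tendsto (fun n : ℕ =>
      kk * cc * ((n:ℝ) / ((n:ℝ) - 1/24)) + kk * ((n:ℝ) / (Real.sqrt ((n:ℝ) - 1/24))^3))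
      atTop (nhds 1) := by
    have h := (tendsto_nu.const_mul (kk * cc)).add (tendsto_ns3.const_mul kk)
    rw [show kk * cc * 1 + kk * 0 = 1 by rw [mul_one, mul_zero, add_zero, kk_mul_cc]] at h
    exact h
  have hfull := (hA.mul tendsto_exp_diff).add (hB.mul tendsto_exp_sum)
  rw [mul_one, mul_zero, add_zero] at hfull
  refine hfull.congr' ?_
  filter_upwards [eventually_ge_atTop 1] with n hn
  exact (ratio_eq hn).symm
end
end

section
/- Let h₁, k₁, h, k, h₂, k₂ be integers with k₁, k, k₂ ≥ 1, h·k₁ − k·h₁ = 1 and k·h₂ − h·k₂ = 1. Then the point α₁ = h/k − k₁/(k(k² + k₁²)) + i/(k² + k₁²) lies on both Ford circles C(h,k) and C(h₁,k₁) (i.e. |α₁ − (h/k + i/(2k²))| = 1/(2k²) and |α₁ − (h₁/k₁ + i/(2k₁²))| = 1/(2k₁²)), and the point α₂ = h/k + k₂/(k(k² + k₂²)) + i/(k² + k₂²) lies on both Ford circles C(h,k) and C(h₂,k₂). -/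
private lemma abs_aux (x y r : ℝ) (z : ℂ) (hz : z = (x : ℂ) + (y : ℂ) * Complex.I)
    (hxy : x ^ 2 + y ^ 2 = r ^ 2) (hr : 0 ≤ r) : Norm.norm z = r := by
  rw [hz, Complex.norm_add_mul_I, hxy, Real.sqrt_sq hr]

/-- The tangency points of consecutive Ford circles: `α₁` lies on `C(h,k)` and
`C(h₁,k₁)`, and `α₂` lies on `C(h,k)` and `C(h₂,k₂)`. -/
theorem ford_tangency_points (h₁ h h₂ : ℤ) (k₁ k k₂ : ℕ)
    (hk₁ : 0 < k₁) (hk : 0 < k) (hk₂ : 0 < k₂)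
    (e1 : h * k₁ - k * h₁ = 1) (e2 : k * h₂ - h * k₂ = 1) :
    Norm.norm (((h : ℂ) / k - (k₁ : ℂ) / (k * ((k : ℂ) ^ 2 + (k₁ : ℂ) ^ 2)) +
          Complex.I / ((k : ℂ) ^ 2 + (k₁ : ℂ) ^ 2)) -
        ((h : ℂ) / k + Complex.I / (2 * (k : ℂ) ^ 2))) = 1 / (2 * (k : ℝ) ^ 2) ∧
      Norm.norm (((h : ℂ) / k - (k₁ : ℂ) / (k * ((k : ℂ) ^ 2 + (k₁ : ℂ) ^ 2)) +
          Complex.I / ((k : ℂ) ^ 2 + (k₁ : ℂ) ^ 2)) -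
        ((h₁ : ℂ) / k₁ + Complex.I / (2 * (k₁ : ℂ) ^ 2))) = 1 / (2 * (k₁ : ℝ) ^ 2) ∧
      Norm.norm (((h : ℂ) / k + (k₂ : ℂ) / (k * ((k : ℂ) ^ 2 + (k₂ : ℂ) ^ 2)) +
          Complex.I / ((k : ℂ) ^ 2 + (k₂ : ℂ) ^ 2)) -
        ((h : ℂ) / k + Complex.I / (2 * (k : ℂ) ^ 2))) = 1 / (2 * (k : ℝ) ^ 2) ∧
      Norm.norm (((h : ℂ) / k + (k₂ : ℂ) / (k * ((k : ℂ) ^ 2 + (k₂ : ℂ) ^ 2)) +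
          Complex.I / ((k : ℂ) ^ 2 + (k₂ : ℂ) ^ 2)) -
        ((h₂ : ℂ) / k₂ + Complex.I / (2 * (k₂ : ℂ) ^ 2))) = 1 / (2 * (k₂ : ℝ) ^ 2) := by
  have hkR : (0 : ℝ) < (k : ℝ) := by exact_mod_cast hk
  have hk1R : (0 : ℝ) < (k₁ : ℝ) := by exact_mod_cast hk₁
  have hk2R : (0 : ℝ) < (k₂ : ℝ) := by exact_mod_cast hk₂
  have hkC : ((k : ℂ)) ≠ 0 := by exact_mod_cast hkR.ne'
  have hk1C : ((k₁ : ℂ)) ≠ 0 := by exact_mod_cast hk1R.ne'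
  have hk2C : ((k₂ : ℂ)) ≠ 0 := by exact_mod_cast hk2R.ne'
  have hc₁R : (0:ℝ) < (k : ℝ) ^ 2 + (k₁ : ℝ) ^ 2 := by positivity
  have hc₂R : (0:ℝ) < (k : ℝ) ^ 2 + (k₂ : ℝ) ^ 2 := by positivity
  have hc₁Cne : ((k : ℂ) ^ 2 + (k₁ : ℂ) ^ 2) ≠ 0 := by
    have : (((k:ℝ)^2 + (k₁:ℝ)^2 : ℝ) : ℂ) ≠ 0 := by exact_mod_cast hc₁R.ne'
    simpa using this
  have hc₂Cne : ((k : ℂ) ^ 2 + (k₂ : ℂ) ^ 2) ≠ 0 := by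
    have : (((k:ℝ)^2 + (k₂:ℝ)^2 : ℝ) : ℂ) ≠ 0 := by exact_mod_cast hc₂R.ne'
    simpa using this
  have e1C : (h : ℂ) * k₁ - (k : ℂ) * h₁ = 1 := by exact_mod_cast e1
  have e2C : (k : ℂ) * h₂ - (h : ℂ) * k₂ = 1 := by exact_mod_cast e2
  have hd1 : (h : ℂ) / k - (h₁ : ℂ) / k₁ = 1 / ((k : ℂ) * k₁) := by
    rw [div_sub_div _ _ hkC hk1C, e1C]
  have hd2 : (h₂ : ℂ) / k₂ - (h : ℂ) / k = 1 / ((k : ℂ) * k₂) := by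
    rw [div_sub_div _ _ hk2C hkC, show (h₂:ℂ) * k - (k₂:ℂ) * h = 1 by linear_combination e2C,
      mul_comm ((k₂:ℂ)) ((k:ℂ))]
  have hx1 : (1 : ℂ)/((k:ℂ)*k₁) - (k₁:ℂ)/((k:ℂ)*((k:ℂ)^2+(k₁:ℂ)^2))
      = (k:ℂ)/((k₁:ℂ)*((k:ℂ)^2+(k₁:ℂ)^2)) := by
    rw [div_sub_div _ _ (mul_ne_zero hkC hk1C) (mul_ne_zero hkC hc₁Cne),
      div_eq_div_iff (mul_ne_zero (mul_ne_zero hkC hk1C) (mul_ne_zero hkC hc₁Cne))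
        (mul_ne_zero hk1C hc₁Cne)]
    ring
  have hx2 : (k₂:ℂ)/((k:ℂ)*((k:ℂ)^2+(k₂:ℂ)^2)) - (1 : ℂ)/((k:ℂ)*k₂)
      = -((k:ℂ)/((k₂:ℂ)*((k:ℂ)^2+(k₂:ℂ)^2))) := by
    rw [div_sub_div _ _ (mul_ne_zero hkC hc₂Cne) (mul_ne_zero hkC hk2C), ← neg_div,
      div_eq_div_iff (mul_ne_zero (mul_ne_zero hkC hc₂Cne) (mul_ne_zero hkC hk2C))
        (mul_ne_zero hk2C hc₂Cne)]
    ring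
  refine ⟨?_, ?_, ?_, ?_⟩
  · refine abs_aux (-((k₁:ℝ) / ((k : ℝ) * ((k:ℝ)^2 + (k₁:ℝ)^2))))
      (1 / ((k:ℝ)^2 + (k₁:ℝ)^2) - 1 / (2 * (k : ℝ) ^ 2))
      (1 / (2 * (k : ℝ) ^ 2)) _ ?_ ?_ (by positivity)
    · push_cast
      ring
    · field_simp
      ring
  · refine abs_aux ((k:ℝ) / ((k₁ : ℝ) * ((k:ℝ)^2 + (k₁:ℝ)^2)))
      (1 / ((k:ℝ)^2 + (k₁:ℝ)^2) - 1 / (2 * (k₁ : ℝ) ^ 2))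
      (1 / (2 * (k₁ : ℝ) ^ 2)) _ ?_ ?_ (by positivity)
    · have : ((h : ℂ) / k - (k₁ : ℂ) / (k * ((k : ℂ) ^ 2 + (k₁ : ℂ) ^ 2)) +
          Complex.I / ((k : ℂ) ^ 2 + (k₁ : ℂ) ^ 2)) -
          ((h₁ : ℂ) / k₁ + Complex.I / (2 * (k₁ : ℂ) ^ 2))
          = (1 / ((k : ℂ) * k₁) - (k₁ : ℂ) / (k * ((k : ℂ) ^ 2 + (k₁ : ℂ) ^ 2))) +
            (Complex.I / ((k : ℂ) ^ 2 + (k₁ : ℂ) ^ 2) - Complex.I / (2 * (k₁ : ℂ) ^ 2)) := by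
        rw [← hd1]; ring
      rw [this, hx1]
      push_cast
      ring
    · field_simp
      ring
  · refine abs_aux ((k₂:ℝ) / ((k : ℝ) * ((k:ℝ)^2 + (k₂:ℝ)^2)))
      (1 / ((k:ℝ)^2 + (k₂:ℝ)^2) - 1 / (2 * (k : ℝ) ^ 2))
      (1 / (2 * (k : ℝ) ^ 2)) _ ?_ ?_ (by positivity)
    · push_cast
      ring
    · field_simp
      ring
  · refine abs_aux (-((k:ℝ) / ((k₂ : ℝ) * ((k:ℝ)^2 + (k₂:ℝ)^2))))
      (1 / ((k:ℝ)^2 + (k₂:ℝ)^2) - 1 / (2 * (k₂ : ℝ) ^ 2))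
      (1 / (2 * (k₂ : ℝ) ^ 2)) _ ?_ ?_ (by positivity)
    · have : ((h : ℂ) / k + (k₂ : ℂ) / (k * ((k : ℂ) ^ 2 + (k₂ : ℂ) ^ 2)) +
          Complex.I / ((k : ℂ) ^ 2 + (k₂ : ℂ) ^ 2)) -
          ((h₂ : ℂ) / k₂ + Complex.I / (2 * (k₂ : ℂ) ^ 2))
          = ((k₂ : ℂ) / (k * ((k : ℂ) ^ 2 + (k₂ : ℂ) ^ 2)) - 1 / ((k : ℂ) * k₂)) +
            (Complex.I / ((k : ℂ) ^ 2 + (k₂ : ℂ) ^ 2) - Complex.I / (2 * (k₂ : ℂ) ^ 2)) := by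
        rw [← hd2]; ring
      rw [this, hx2]
      push_cast
      ring
    · field_simp
      ring
end

section
/- Let N ≥ 1 and let k, k₁, k₂ be positive integers with k, k₁, k₂ ≤ N, k + k₁ ≥ N + 1 and k + k₂ ≥ N + 1. Define w₁ = k²/(k² + k₁²) + i·k·k₁/(k² + k₁²) and w₂ = k²/(k² + k₂²) − i·k·k₂/(k² + k₂²). Then |w₁| = k/√(k² + k₁²) and |w₂| = k/√(k² + k₂²); for every point w = t·w₁ + (1 − t)·w₂ with t ∈ [0,1] one has |w| ≤ √2·k/(N + 1), Re w ≥ k²/(2N²), and Re(1/w) > 1/4; and |w₁ − w₂| ≤ 2√2·k/(N + 1). -/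
private lemma aux_abs_w (a b : ℝ) (ha : 0 < a) (hb : 0 < b) :
    Real.sqrt ((a^2/(a^2+b^2))^2 + (a*b/(a^2+b^2))^2) = a / Real.sqrt (a^2+b^2) := by
  have hD : (0:ℝ) < a^2+b^2 := by positivity
  have h1 : (a^2/(a^2+b^2))^2 + (a*b/(a^2+b^2))^2 = a^2/(a^2+b^2) := by
    field_simp
  rw [h1, Real.sqrt_div (by positivity), Real.sqrt_sq ha.le]

private lemma aux_abs_bound (a b n : ℝ) (ha : 0 < a) (hb : 0 < b) (hn : 0 < n)
    (hsum : n + 1 ≤ a + b) :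
    a / Real.sqrt (a^2+b^2) ≤ Real.sqrt 2 * a / (n+1) := by
  have hD : (0:ℝ) < a^2+b^2 := by positivity
  have hsd : (0:ℝ) < Real.sqrt (a^2+b^2) := Real.sqrt_pos.2 hD
  have h2D : (n+1)^2 ≤ 2*(a^2+b^2) := by nlinarith [sq_nonneg (a-b)]
  have hsq : n+1 ≤ Real.sqrt 2 * Real.sqrt (a^2+b^2) := by
    rw [← Real.sqrt_mul (by norm_num)]
    calc n+1 = Real.sqrt ((n+1)^2) := (Real.sqrt_sq (by positivity)).symm
    _ ≤ _ := Real.sqrt_le_sqrt h2D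
  rw [div_le_div_iff₀ hsd (by positivity)]
  nlinarith [Real.sqrt_nonneg (a^2+b^2)]

private lemma aux_quarter (a n : ℝ) (ha : 0 < a) (hn : 1 ≤ n) :
    2 * a^2 / (n+1)^2 * (1/4) < a^2 / (2*n^2) := by
  rw [div_mul_eq_mul_div, div_lt_div_iff₀ (by positivity) (by positivity)]
  nlinarith

/-- Estimates on the chord joining `w₁` and `w₂`, the images of the Ford-circle
tangency points. -/
theorem chord_estimates (N k k₁ k₂ : ℕ) (hN : 1 ≤ N) (hk : 0 < k) (hk₁ : 0 < k₁)
    (hk₂ : 0 < k₂) (hkN : k ≤ N) (hk₁N : k₁ ≤ N) (hk₂N : k₂ ≤ N)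
    (hsum₁ : N + 1 ≤ k + k₁) (hsum₂ : N + 1 ≤ k + k₂) :
    Norm.norm ((k : ℂ) ^ 2 / ((k : ℂ) ^ 2 + (k₁ : ℂ) ^ 2) +
          Complex.I * k * k₁ / ((k : ℂ) ^ 2 + (k₁ : ℂ) ^ 2)) =
        k / Real.sqrt ((k : ℝ) ^ 2 + (k₁ : ℝ) ^ 2) ∧
      Norm.norm ((k : ℂ) ^ 2 / ((k : ℂ) ^ 2 + (k₂ : ℂ) ^ 2) -
          Complex.I * k * k₂ / ((k : ℂ) ^ 2 + (k₂ : ℂ) ^ 2)) =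
        k / Real.sqrt ((k : ℝ) ^ 2 + (k₂ : ℝ) ^ 2) ∧
      (∀ t : ℝ, t ∈ Set.Icc (0 : ℝ) 1 →
        Norm.norm ((t : ℂ) * ((k : ℂ) ^ 2 / ((k : ℂ) ^ 2 + (k₁ : ℂ) ^ 2) +
              Complex.I * k * k₁ / ((k : ℂ) ^ 2 + (k₁ : ℂ) ^ 2)) +
            (1 - (t : ℂ)) * ((k : ℂ) ^ 2 / ((k : ℂ) ^ 2 + (k₂ : ℂ) ^ 2) -
              Complex.I * k * k₂ / ((k : ℂ) ^ 2 + (k₂ : ℂ) ^ 2))) ≤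
          Real.sqrt 2 * k / (N + 1) ∧
        (k : ℝ) ^ 2 / (2 * (N : ℝ) ^ 2) ≤
          ((t : ℂ) * ((k : ℂ) ^ 2 / ((k : ℂ) ^ 2 + (k₁ : ℂ) ^ 2) +
              Complex.I * k * k₁ / ((k : ℂ) ^ 2 + (k₁ : ℂ) ^ 2)) +
            (1 - (t : ℂ)) * ((k : ℂ) ^ 2 / ((k : ℂ) ^ 2 + (k₂ : ℂ) ^ 2) -
              Complex.I * k * k₂ / ((k : ℂ) ^ 2 + (k₂ : ℂ) ^ 2))).re ∧
        (1 / 4 : ℝ) <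
          (1 / ((t : ℂ) * ((k : ℂ) ^ 2 / ((k : ℂ) ^ 2 + (k₁ : ℂ) ^ 2) +
              Complex.I * k * k₁ / ((k : ℂ) ^ 2 + (k₁ : ℂ) ^ 2)) +
            (1 - (t : ℂ)) * ((k : ℂ) ^ 2 / ((k : ℂ) ^ 2 + (k₂ : ℂ) ^ 2) -
              Complex.I * k * k₂ / ((k : ℂ) ^ 2 + (k₂ : ℂ) ^ 2)))).re) ∧
      Norm.norm (((k : ℂ) ^ 2 / ((k : ℂ) ^ 2 + (k₁ : ℂ) ^ 2) +
            Complex.I * k * k₁ / ((k : ℂ) ^ 2 + (k₁ : ℂ) ^ 2)) -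
          ((k : ℂ) ^ 2 / ((k : ℂ) ^ 2 + (k₂ : ℂ) ^ 2) -
            Complex.I * k * k₂ / ((k : ℂ) ^ 2 + (k₂ : ℂ) ^ 2))) ≤
        2 * Real.sqrt 2 * k / (N + 1) := by
  have hkR : (0:ℝ) < k := by exact_mod_cast hk
  have hk1R : (0:ℝ) < k₁ := by exact_mod_cast hk₁
  have hk2R : (0:ℝ) < k₂ := by exact_mod_cast hk₂
  have hNR : (1:ℝ) ≤ N := by exact_mod_cast hN
  have hkNR : (k:ℝ) ≤ N := by exact_mod_cast hkN
  have hk1NR : (k₁:ℝ) ≤ N := by exact_mod_cast hk₁N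
  have hk2NR : (k₂:ℝ) ≤ N := by exact_mod_cast hk₂N
  have hs1R : (N:ℝ) + 1 ≤ k + k₁ := by exact_mod_cast hsum₁
  have hs2R : (N:ℝ) + 1 ≤ k + k₂ := by exact_mod_cast hsum₂
  set D₁ : ℝ := (k:ℝ)^2 + (k₁:ℝ)^2 with hD₁def
  set D₂ : ℝ := (k:ℝ)^2 + (k₂:ℝ)^2 with hD₂def
  have hD₁pos : 0 < D₁ := by positivity
  have hD₂pos : 0 < D₂ := by positivity
  have hc₁ : ((k:ℂ)^2 + (k₁:ℂ)^2) = (D₁ : ℂ) := by push_cast [hD₁def]; ring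
  have hc₂ : ((k:ℂ)^2 + (k₂:ℂ)^2) = (D₂ : ℂ) := by push_cast [hD₂def]; ring
  have hc₁0 : ((k:ℂ)^2 + (k₁:ℂ)^2) ≠ 0 := by
    rw [hc₁]; exact_mod_cast hD₁pos.ne'
  have hc₂0 : ((k:ℂ)^2 + (k₂:ℂ)^2) ≠ 0 := by
    rw [hc₂]; exact_mod_cast hD₂pos.ne'
  have hw₁ : (k:ℂ)^2/((k:ℂ)^2+(k₁:ℂ)^2) + Complex.I*(k:ℂ)*(k₁:ℂ)/((k:ℂ)^2+(k₁:ℂ)^2)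
      = (((k:ℝ)^2/D₁ : ℝ) : ℂ) + (((k:ℝ)*(k₁:ℝ)/D₁ : ℝ) : ℂ) * Complex.I := by
    rw [hc₁]
    have hD₁0 : (D₁ : ℂ) ≠ 0 := by exact_mod_cast hD₁pos.ne'
    field_simp
    push_cast
    ring
    simp [hD₁0]
  have hw₂ : (k:ℂ)^2/((k:ℂ)^2+(k₂:ℂ)^2) - Complex.I*(k:ℂ)*(k₂:ℂ)/((k:ℂ)^2+(k₂:ℂ)^2)
      = (((k:ℝ)^2/D₂ : ℝ) : ℂ) + ((-((k:ℝ)*(k₂:ℝ)/D₂) : ℝ) : ℂ) * Complex.I := by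
    rw [hc₂]
    have hD₂0 : (D₂ : ℂ) ≠ 0 := by exact_mod_cast hD₂pos.ne'
    field_simp
    push_cast
    ring
    simp [hD₂0]
  have habs₁ : ‖(k:ℂ)^2/((k:ℂ)^2+(k₁:ℂ)^2) + Complex.I*(k:ℂ)*(k₁:ℂ)/((k:ℂ)^2+(k₁:ℂ)^2)‖
      = (k:ℝ) / Real.sqrt D₁ := by
    rw [hw₁, Complex.norm_add_mul_I]
    exact aux_abs_w (k:ℝ) (k₁:ℝ) hkR hk1R
  have habs₂ : ‖(k:ℂ)^2/((k:ℂ)^2+(k₂:ℂ)^2) - Complex.I*(k:ℂ)*(k₂:ℂ)/((k:ℂ)^2+(k₂:ℂ)^2)‖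
      = (k:ℝ) / Real.sqrt D₂ := by
    rw [hw₂, Complex.norm_add_mul_I]
    have : ((k:ℝ)^2/D₂)^2 + (-((k:ℝ)*(k₂:ℝ)/D₂))^2 = ((k:ℝ)^2/D₂)^2 + ((k:ℝ)*(k₂:ℝ)/D₂)^2 := by ring
    rw [this]
    exact aux_abs_w (k:ℝ) (k₂:ℝ) hkR hk2R
  set W₁ : ℂ := (k:ℂ)^2/((k:ℂ)^2+(k₁:ℂ)^2) + Complex.I*(k:ℂ)*(k₁:ℂ)/((k:ℂ)^2+(k₁:ℂ)^2) with hW₁def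
  set W₂ : ℂ := (k:ℂ)^2/((k:ℂ)^2+(k₂:ℂ)^2) - Complex.I*(k:ℂ)*(k₂:ℂ)/((k:ℂ)^2+(k₂:ℂ)^2) with hW₂def
  clear_value W₁ W₂
  have hb₁ : (k:ℝ) / Real.sqrt D₁ ≤ Real.sqrt 2 * k / (N+1) :=
    aux_abs_bound (k:ℝ) (k₁:ℝ) (N:ℝ) hkR hk1R (by linarith) hs1R
  have hb₂ : (k:ℝ) / Real.sqrt D₂ ≤ Real.sqrt 2 * k / (N+1) :=
    aux_abs_bound (k:ℝ) (k₂:ℝ) (N:ℝ) hkR hk2R (by linarith) hs2R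
  -- real parts bounds
  have hre₁ : (k:ℝ)^2/(2*(N:ℝ)^2) ≤ (k:ℝ)^2/D₁ := by
    apply div_le_div_of_nonneg_left (by positivity) hD₁pos
    nlinarith
  have hre₂ : (k:ℝ)^2/(2*(N:ℝ)^2) ≤ (k:ℝ)^2/D₂ := by
    apply div_le_div_of_nonneg_left (by positivity) hD₂pos
    nlinarith
  refine ⟨habs₁, habs₂, ?_, ?_⟩
  · intro t ht
    obtain ⟨ht0, ht1⟩ := ht
    set w : ℂ := (t : ℂ) * W₁ + (1 - (t:ℂ)) * W₂ with hwdef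
    have habsw : ‖w‖ ≤ Real.sqrt 2 * k / (N+1) := by
      calc ‖w‖ ≤ ‖(t:ℂ)‖ * ((k:ℝ)/Real.sqrt D₁)
            + ‖1 - (t:ℂ)‖ * ((k:ℝ)/Real.sqrt D₂) := by
            rw [hwdef]
            refine le_trans (norm_add_le _ _) ?_
            rw [norm_mul, norm_mul, habs₁, habs₂]
        _ = t * ((k:ℝ)/Real.sqrt D₁) + (1-t) * ((k:ℝ)/Real.sqrt D₂) := by
            have h1 : (1 : ℂ) - (t:ℂ) = ((1 - t : ℝ) : ℂ) := by push_cast; ring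
            rw [h1, Complex.norm_real, Complex.norm_real, Real.norm_eq_abs, Real.norm_eq_abs, abs_of_nonneg ht0,
              abs_of_nonneg (by linarith)]
        _ ≤ t * (Real.sqrt 2 * k / (N+1)) + (1-t) * (Real.sqrt 2 * k / (N+1)) := by
            gcongr <;> linarith
        _ = Real.sqrt 2 * k / (N+1) := by ring
    have hwre : w.re = t * ((k:ℝ)^2/D₁) + (1-t) * ((k:ℝ)^2/D₂) := by
      rw [hwdef, hw₁, hw₂]
      simp only [Complex.add_re, Complex.add_im, Complex.mul_re, Complex.mul_im,
        Complex.sub_re, Complex.sub_im, Complex.ofReal_re, Complex.ofReal_im,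
        Complex.I_re, Complex.I_im, Complex.one_re, Complex.one_im]
      ring
    have hreb : (k:ℝ)^2/(2*(N:ℝ)^2) ≤ w.re := by
      rw [hwre]
      calc (k:ℝ)^2/(2*(N:ℝ)^2) = t * ((k:ℝ)^2/(2*(N:ℝ)^2)) + (1-t) * ((k:ℝ)^2/(2*(N:ℝ)^2)) := by ring
        _ ≤ _ := by gcongr <;> linarith
    clear_value w
    refine ⟨habsw, hreb, ?_⟩
    -- Re (1/w) > 1/4
    have hrepos : 0 < w.re := lt_of_lt_of_le (by positivity) hreb
    have hw0 : w ≠ 0 := by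
      intro h
      rw [h] at hrepos
      simp at hrepos
    have hnS : 0 < Complex.normSq w := Complex.normSq_pos.mpr hw0
    have hnSle : Complex.normSq w ≤ 2 * (k:ℝ)^2 / ((N:ℝ)+1)^2 := by
      rw [← Complex.sq_norm]
      have h2 : (Real.sqrt 2 * (k:ℝ) / ((N:ℝ)+1))^2 = 2 * (k:ℝ)^2 / ((N:ℝ)+1)^2 := by
        rw [div_pow, mul_pow, Real.sq_sqrt (by norm_num : (0:ℝ) ≤ 2)]
      rw [← h2]
      exact pow_le_pow_left₀ (norm_nonneg _) habsw 2
    have key : (1/4:ℝ) < w.re / Complex.normSq w := by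
      rw [lt_div_iff₀ hnS]
      have h1 : 2 * (k:ℝ)^2 / ((N:ℝ)+1)^2 * (1/4) < (k:ℝ)^2/(2*(N:ℝ)^2) :=
        aux_quarter (k:ℝ) (N:ℝ) hkR hNR
      have h2 : (1/4:ℝ) * Complex.normSq w ≤ (1/4) * (2 * (k:ℝ)^2 / ((N:ℝ)+1)^2) :=
        mul_le_mul_of_nonneg_left hnSle (by norm_num)
      linarith
    rw [show (1:ℂ)/w = w⁻¹ from one_div w, Complex.inv_re]
    exact key
  · have htri : ‖W₁ - W₂‖ ≤ ‖W₁‖ + ‖W₂‖ := by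
      rw [sub_eq_add_neg]
      refine le_trans (norm_add_le _ _) ?_
      rw [norm_neg]
    rw [habs₁, habs₂] at htri
    refine le_trans htri ?_
    have : 2 * Real.sqrt 2 * (k:ℝ) / ((N:ℝ)+1)
        = Real.sqrt 2 * k / (N+1) + Real.sqrt 2 * k / (N+1) := by ring
    rw [this]
    exact add_le_add hb₁ hb₂
end
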